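/- Let g : [0,∞) → ℝ be continuous with |g(t)| ≤ C·e^(A t) for all t ≥ 0, for some constants C > 0 and A > 0. Let (α_n) be a sequence with 0 < α_n ≤ 1/n for all n. Then for every b > 0, U_n^[α_n](g; x) → g(x) uniformly for x in [0, b] as n → ∞ (where U_n^[α_n](g; x) is well defined for all n > A). -/

import Mathlib

open MeasureTheory Filter

noncomputable section

/-- The Szász basis function `e^(-nu) (nu)^i / i!`. -/
def szaszBasis (n i : ℕ) (u : ℝ) : ℝ :=
  Real.exp (-(n : ℝ) * u) * ((n : ℝ) * u) ^ i / (Nat.factorial i : ℝ)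

/-- The rising factorial `x^(i,-α) = ∏_{j=0}^{i-1} (x + jα)` with increment `α`. -/
def risingFac (x α : ℝ) (i : ℕ) : ℝ :=
  ∏ j ∈ Finset.range i, (x + (j : ℝ) * α)

/-- The Durrmeyer modification of the generalized Szász-Mirakjan operators:
`U_n^[α](f; x) = n Σ_i (1+nα)^(−x/α) (α+1/n)^(−i) x^(i,−α)/i! ∫_0^∞ e^(−nu)(nu)^i/i! f(u) du`. -/
def U (n : ℕ) (α : ℝ) (f : ℝ → ℝ) (x : ℝ) : ℝ :=
  (n : ℝ) * ∑' i : ℕ,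
    (1 + (n : ℝ) * α) ^ (-x / α) * (α + 1 / (n : ℝ)) ^ (-(i : ℤ)) *
      (risingFac x α i / (Nat.factorial i : ℝ)) *
      ∫ u in Set.Ioi (0 : ℝ), szaszBasis n i u * f u

/-- The `m`-th central moment `Θ_{n,m}^[α](x) = U_n^[α]((t−x)^m; x)`. -/
def theta (n : ℕ) (α : ℝ) (m : ℕ) (x : ℝ) : ℝ :=
  U n α (fun t => (t - x) ^ m) x

end

/-!
Writing `s = x / α` and `p = n α`, the operator reads
`U_n^[α](f; x) = Σ_i w_i · E[f(Γ_i)]`, where `(w_i)` is the negative binomial distribution with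
shape `s` and mean `s p`, and `Γ_i` is Gamma distributed with shape `i + 1` and rate `n`.
So `U_n^[α]` is a positive linear operator reproducing constants, whose second central moment
`x α + 2x/n + 2/n²` tends to `0` uniformly on `[0, b]` when `α ≤ 1/n`, and whose exponential moments
`U_n^[α](e^{ct}; x)` stay bounded on `[0, b]` for `n ≥ 4c` (they are computed from the generating
function `(1 - p (r - 1))^(-s)` of the weights).
Uniform continuity of `g` on a large interval `[0, R]` and the growth bound beyond it give
`|g u - g x| ≤ ε + K (u - x)² + η e^{2Au}` with `η` as small as we like, and applying `U_n^[α]` to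
this majorant proves the uniform convergence.
-/

open Real Set MeasureTheory Filter Polynomial Topology
open scoped Nat

theorem Ring.choose_add_sub_one_eq {K : Type*} [Field K] [CharZero K] [BinomialRing K] (a : K)
    (n : ℕ) : Ring.choose (a + n - 1) n = (ascPochhammer K n).eval a / n ! := by
  rw [← Ring.multichoose_eq, eq_div_iff (Nat.cast_ne_zero.2 n.factorial_ne_zero), mul_comm,
    ← nsmul_eq_mul, Ring.factorial_nsmul_multichoose_eq_ascPochhammer, ascPochhammer_smeval_cast,
    ascPochhammer_smeval_eq_eval]

theorem hasSum_ascPochhammer_div_factorial_mul_pow (s : ℝ) {z : ℝ} (hz : |z| < 1) :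
    HasSum (fun i : ℕ => (ascPochhammer ℝ i).eval s / i ! * z ^ i) ((1 - z) ^ (-s)) := by
  have h := (Real.one_div_one_sub_rpow_hasFPowerSeriesOnBall_zero s).hasSum
    (y := z) (by simpa [enorm_eq_nnnorm, ← NNReal.coe_lt_one] using hz)
  have hz1 : 0 ≤ 1 - z := by linarith [le_abs_self z]
  simpa [Ring.choose_add_sub_one_eq, mul_comm, ← Real.rpow_neg hz1] using h

theorem abs_tsum_mul_sub_le {w a B : ℕ → ℝ} {y β : ℝ} (hw : ∀ i, 0 ≤ w i) (hw1 : HasSum w 1)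
    (hB : HasSum (fun i => w i * B i) β) (haB : ∀ i, |a i - y| ≤ B i) :
    |∑' i, w i * a i - y| ≤ β := by
  have hle : ∀ i, ‖w i * (a i - y)‖ ≤ w i * B i := fun i => by
    rw [Real.norm_eq_abs, abs_mul, abs_of_nonneg (hw i)]
    exact mul_le_mul_of_nonneg_left (haB i) (hw i)
  have hsum : HasSum (fun i => w i * a i) (∑' i, w i * (a i - y) + 1 * y) :=
    ((Summable.of_norm_bounded hB.summable hle).hasSum.add (hw1.mul_right y)).congr_fun
      fun i => by ring
  rw [hsum.tsum_eq, one_mul, add_sub_cancel_right, ← Real.norm_eq_abs]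
  exact tsum_of_norm_bounded hB hle

theorem one_sub_rpow_neg_le_exp {s t : ℝ} (hs : 0 ≤ s) (ht0 : 0 ≤ t) (ht : t ≤ 1 / 2) :
    (1 - t) ^ (-s) ≤ exp (2 * s * t) := by
  have h1t : 0 < 1 - t := by linarith
  rw [rpow_neg h1t.le, ← inv_rpow h1t.le, rpow_def_of_pos (inv_pos.2 h1t), exp_le_exp]
  have hlog : log (1 - t)⁻¹ ≤ 2 * t := by
    refine (log_le_sub_one_of_pos (inv_pos.2 h1t)).trans ?_
    rw [inv_eq_one_div, div_sub_one h1t.ne', div_le_iff₀ h1t]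
    nlinarith [mul_nonneg ht0 (by linarith : 0 ≤ 1 - 2 * t)]
  linarith [mul_le_mul_of_nonneg_right hlog hs]

/-- The negative binomial distribution with shape `s` and mean `s * p`. -/
noncomputable def negBinomialWeight (s p : ℝ) (i : ℕ) : ℝ :=
  (1 + p) ^ (-s) * ((ascPochhammer ℝ i).eval s / i ! * (p / (1 + p)) ^ i)

section negBinomialWeight

variable {s p : ℝ}

theorem negBinomialWeight_nonneg (hs : 0 ≤ s) (hp : 0 ≤ p) (i : ℕ) :
    0 ≤ negBinomialWeight s p i := by
  have : 0 ≤ (ascPochhammer ℝ i).eval s := by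
    rcases hs.lt_or_eq with hs | rfl
    · exact (ascPochhammer_pos i s hs).le
    · rw [ascPochhammer_eval_zero]; positivity
  unfold negBinomialWeight
  positivity

theorem hasSum_negBinomialWeight_mul_pow (hp : 0 ≤ p) {r : ℝ} (hr : 0 ≤ r)
    (hpr : p * (r - 1) < 1) :
    HasSum (fun i => negBinomialWeight s p i * r ^ i) ((1 - p * (r - 1)) ^ (-s)) := by
  have hz : |p * r / (1 + p)| < 1 := by
    rw [abs_of_nonneg (by positivity), div_lt_one (by positivity)]
    linarith
  have hlim : (1 - p * (r - 1)) ^ (-s) = (1 + p) ^ (-s) * (1 - p * r / (1 + p)) ^ (-s) := by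
    rw [← Real.mul_rpow (by positivity) (by linarith [(abs_lt.mp hz).2])]
    congr 1
    field_simp
    ring
  rw [hlim]
  refine ((hasSum_ascPochhammer_div_factorial_mul_pow s hz).mul_left _).congr_fun fun i => ?_
  simp only [negBinomialWeight, mul_div_right_comm p r, mul_pow]
  ring

theorem hasSum_negBinomialWeight (hp : 0 ≤ p) : HasSum (negBinomialWeight s p) 1 := by
  simpa using hasSum_negBinomialWeight_mul_pow (s := s) hp zero_le_one (by simp)

theorem negBinomialWeight_succ_mul (hp : 0 ≤ p) (i : ℕ) :
    negBinomialWeight s p (i + 1) * (i + 1) = s * p * negBinomialWeight (s + 1) p i := by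
  have hfac : ((i + 1) ! : ℝ) = (i + 1) * i ! := by push_cast [Nat.factorial_succ]; ring
  have heval : (ascPochhammer ℝ (i + 1)).eval s = s * (ascPochhammer ℝ i).eval (s + 1) := by
    simp [ascPochhammer_succ_left]
  have hpow : (1 + p) ^ (-s) = (1 + p) * (1 + p) ^ (-(s + 1)) := by
    rw [rpow_neg (by positivity), rpow_neg (by positivity), rpow_add_one (by positivity)]
    field_simp
  simp only [negBinomialWeight, hfac, heval, hpow, pow_succ]
  field_simp

theorem hasSum_negBinomialWeight_mul_cast_mul {f : ℝ → ℝ} {a : ℝ} (hp : 0 ≤ p)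
    (h : HasSum (fun i : ℕ => negBinomialWeight (s + 1) p i * f (i + 1)) a) :
    HasSum (fun i : ℕ => negBinomialWeight s p i * (i * f i)) (s * p * a) := by
  rw [← hasSum_nat_add_iff' 1, Finset.sum_range_one, Nat.cast_zero, zero_mul, mul_zero,
    sub_zero]
  refine (h.mul_left (s * p)).congr_fun fun i => ?_
  push_cast
  rw [← mul_assoc, negBinomialWeight_succ_mul hp]
  ring

theorem hasSum_negBinomialWeight_mul_cast (hp : 0 ≤ p) :
    HasSum (fun i : ℕ => negBinomialWeight s p i * i) (s * p) := by
  simpa using hasSum_negBinomialWeight_mul_cast_mul (f := fun _ => 1) (a := 1) hp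
    (by simpa using hasSum_negBinomialWeight hp)

theorem hasSum_negBinomialWeight_mul_cast_sq (hp : 0 ≤ p) :
    HasSum (fun i : ℕ => negBinomialWeight s p i * (i : ℝ) ^ 2)
      (s * p * ((s + 1) * p + 1)) := by
  have h : HasSum (fun i : ℕ => negBinomialWeight (s + 1) p i * ((i : ℝ) + 1))
      ((s + 1) * p + 1) := by
    simpa [mul_add] using
      (hasSum_negBinomialWeight_mul_cast (s := s + 1) hp).add (hasSum_negBinomialWeight hp)
  simpa [sq] using hasSum_negBinomialWeight_mul_cast_mul (f := id) hp h

end negBinomialWeight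

theorem integral_pow_mul_exp_neg_mul_Ioi (k : ℕ) {c : ℝ} (hc : 0 < c) :
    ∫ u in Ioi (0 : ℝ), u ^ k * exp (-(c * u)) = k ! / c ^ (k + 1) := by
  have h := integral_rpow_mul_exp_neg_mul_Ioi (a := k + 1) (by positivity) hc
  simp only [add_sub_cancel_right, rpow_natCast, Gamma_nat_eq_factorial] at h
  rw [h, one_div, ← Nat.cast_succ, rpow_natCast, inv_pow, div_eq_mul_inv, mul_comm]

theorem integrableOn_pow_mul_exp_neg_mul_Ioi (k : ℕ) {c : ℝ} (hc : 0 < c) :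
    IntegrableOn (fun u : ℝ => u ^ k * exp (-(c * u))) (Ioi 0) :=
  .of_integral_ne_zero (by rw [integral_pow_mul_exp_neg_mul_Ioi k hc]; positivity)

section szaszBasis

theorem szaszBasis_eq (n i : ℕ) (u : ℝ) :
    szaszBasis n i u = n ^ i / i ! * (u ^ i * exp (-(n * u))) := by
  rw [szaszBasis, mul_pow, neg_mul]
  ring

theorem szaszBasis_nonneg (n i : ℕ) {u : ℝ} (hu : 0 ≤ u) : 0 ≤ szaszBasis n i u := by
  rw [szaszBasis_eq]; positivity

theorem continuous_szaszBasis (n i : ℕ) : Continuous (szaszBasis n i) := by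
  unfold szaszBasis; fun_prop

theorem szaszBasis_mul_exp (n i : ℕ) (c u : ℝ) :
    szaszBasis n i u * exp (c * u) = n ^ i / i ! * (u ^ i * exp (-((n - c) * u))) := by
  rw [szaszBasis_eq, sub_mul, neg_sub, sub_eq_neg_add, exp_add]
  ring

theorem szaszBasis_mul_pow (n i m : ℕ) (u : ℝ) :
    szaszBasis n i u * u ^ m = n ^ i / i ! * (u ^ (i + m) * exp (-(n * u))) := by
  rw [szaszBasis_eq, pow_add]
  ring

variable {n : ℕ} (i : ℕ)

theorem integrableOn_szaszBasis_mul_exp {c : ℝ} (hc : c < n) :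
    IntegrableOn (fun u => szaszBasis n i u * exp (c * u)) (Ioi 0) := by
  simp only [szaszBasis_mul_exp]
  exact (integrableOn_pow_mul_exp_neg_mul_Ioi i (sub_pos.2 hc)).const_mul _

theorem integral_szaszBasis_mul_exp {c : ℝ} (hc : c < n) :
    ∫ u in Ioi (0 : ℝ), szaszBasis n i u * exp (c * u) = n ^ i / (n - c) ^ (i + 1) := by
  simp only [szaszBasis_mul_exp]
  rw [integral_const_mul, integral_pow_mul_exp_neg_mul_Ioi i (sub_pos.2 hc)]
  field_simp

theorem integrableOn_szaszBasis_mul_pow (hn : 0 < n) (m : ℕ) :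
    IntegrableOn (fun u => szaszBasis n i u * u ^ m) (Ioi 0) := by
  simp only [szaszBasis_mul_pow]
  exact (integrableOn_pow_mul_exp_neg_mul_Ioi (i + m) (by positivity)).const_mul _

theorem integral_szaszBasis_mul_pow (hn : 0 < n) (m : ℕ) :
    ∫ u in Ioi (0 : ℝ), szaszBasis n i u * u ^ m = (i + m)! / (i ! * n ^ (m + 1)) := by
  simp only [szaszBasis_mul_pow]
  rw [integral_const_mul, integral_pow_mul_exp_neg_mul_Ioi (i + m) (by positivity)]
  field_simp
  ring

theorem integrableOn_szaszBasis_mul_sub_sq (hn : 0 < n) (x : ℝ) :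
    IntegrableOn (fun u => szaszBasis n i u * (u - x) ^ 2) (Ioi 0) := by
  have h := ((integrableOn_szaszBasis_mul_pow i hn 2).sub
    ((integrableOn_szaszBasis_mul_pow i hn 1).const_mul (2 * x))).add
    ((integrableOn_szaszBasis_mul_pow i hn 0).const_mul (x ^ 2))
  refine h.congr_fun (fun u _ => ?_) measurableSet_Ioi
  simp only [Pi.add_apply, Pi.sub_apply]
  ring

end szaszBasis

/-- `n * szaszBasis n i` is the density of the Gamma distribution with shape `i + 1` and rate `n`,
so `gammaMean n i f` is the mean of `f` under that distribution. -/
noncomputable def gammaMean (n i : ℕ) (f : ℝ → ℝ) : ℝ :=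
  n * ∫ u in Ioi (0 : ℝ), szaszBasis n i u * f u

section gammaMean

variable {n : ℕ} (i : ℕ)

theorem gammaMean_add {f g : ℝ → ℝ} (hf : IntegrableOn (fun u => szaszBasis n i u * f u) (Ioi 0))
    (hg : IntegrableOn (fun u => szaszBasis n i u * g u) (Ioi 0)) :
    gammaMean n i (fun u => f u + g u) = gammaMean n i f + gammaMean n i g := by
  simp only [gammaMean, mul_add, integral_add hf hg]

theorem gammaMean_const_mul (a : ℝ) (f : ℝ → ℝ) :
    gammaMean n i (fun u => a * f u) = a * gammaMean n i f := by
  simp only [gammaMean, mul_left_comm _ a, integral_const_mul]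

theorem gammaMean_const (hn : 0 < n) (a : ℝ) : gammaMean n i (fun _ => a) = a := by
  have h := integral_szaszBasis_mul_pow i hn 0
  simp only [pow_zero, mul_one, add_zero, zero_add, pow_one] at h
  rw [gammaMean, integral_mul_const, h]
  field_simp

theorem gammaMean_sub_sq (hn : 0 < n) (x : ℝ) :
    gammaMean n i (fun u => (u - x) ^ 2) = (i + 1) / n ^ 2 + ((i + 1) / n - x) ^ 2 := by
  have I := integrableOn_szaszBasis_mul_pow i hn
  have hsplit : (fun u => szaszBasis n i u * (u - x) ^ 2) = fun u =>
      (szaszBasis n i u * u ^ 2 - 2 * x * (szaszBasis n i u * u ^ 1)) +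
        x ^ 2 * (szaszBasis n i u * u ^ 0) := by
    ext u; ring
  have J : IntegrableOn (fun u => szaszBasis n i u * u ^ 2 - 2 * x * (szaszBasis n i u * u ^ 1))
      (Ioi 0) := (I 2).sub ((I 1).const_mul (2 * x))
  rw [gammaMean, hsplit, integral_add J ((I 0).const_mul (x ^ 2)),
    integral_sub (I 2) ((I 1).const_mul (2 * x)), integral_const_mul, integral_const_mul,
    integral_szaszBasis_mul_pow i hn, integral_szaszBasis_mul_pow i hn,
    integral_szaszBasis_mul_pow i hn]
  push_cast [add_zero, Nat.factorial_succ]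
  field_simp
  ring

theorem gammaMean_exp_mul {c : ℝ} (hc : c < n) :
    gammaMean n i (fun u => exp (c * u)) = (n / (n - c)) ^ (i + 1) := by
  rw [gammaMean, integral_szaszBasis_mul_exp i hc, div_pow, pow_succ]
  ring

theorem abs_gammaMean_sub_le (hn : 0 < n) {f h : ℝ → ℝ} {y : ℝ}
    (hf : AEStronglyMeasurable f (volume.restrict (Ioi 0)))
    (hh : IntegrableOn (fun u => szaszBasis n i u * h u) (Ioi 0))
    (hfh : ∀ u, 0 < u → |f u - y| ≤ h u) :
    |gammaMean n i f - y| ≤ gammaMean n i h := by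
  have hconst := (integrableOn_szaszBasis_mul_pow i hn 0).mul_const y
  simp only [pow_zero, mul_one] at hconst
  have hdiff : IntegrableOn (fun u => szaszBasis n i u * (f u - y)) (Ioi 0) := by
    refine Integrable.mono' hh ((continuous_szaszBasis n i).aestronglyMeasurable.restrict.mul
      (hf.sub aestronglyMeasurable_const)) ?_
    filter_upwards [ae_restrict_mem measurableSet_Ioi] with u hu
    rw [norm_mul, Real.norm_of_nonneg (szaszBasis_nonneg n i (le_of_lt hu))]
    exact mul_le_mul_of_nonneg_left (hfh u hu) (szaszBasis_nonneg n i (le_of_lt hu))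
  have hsub : gammaMean n i f - y = gammaMean n i (fun u => f u - y) := by
    have h := gammaMean_add i hdiff hconst
    simp only [sub_add_cancel] at h
    rw [h, gammaMean_const i hn, add_sub_cancel_right]
  rw [hsub, gammaMean, gammaMean, abs_mul, Nat.abs_cast]
  gcongr
  refine abs_integral_le_integral_abs.trans
    (setIntegral_mono_on hdiff.abs hh measurableSet_Ioi fun u hu => ?_)
  rw [abs_mul, abs_of_nonneg (szaszBasis_nonneg n i (le_of_lt hu))]
  exact mul_le_mul_of_nonneg_left (hfh u hu) (szaszBasis_nonneg n i (le_of_lt hu))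

end gammaMean

theorem risingFac_eq_pow_mul_ascPochhammer {α : ℝ} (hα : α ≠ 0) (x : ℝ) (i : ℕ) :
    risingFac x α i = α ^ i * (ascPochhammer ℝ i).eval (x / α) := by
  induction i with
  | zero => simp [risingFac]
  | succ i ih =>
    rw [risingFac, Finset.prod_range_succ, ← risingFac, ih, ascPochhammer_succ_eval, pow_succ]
    field_simp

section U

variable {n : ℕ} {α : ℝ}

theorem U_eq_tsum (hn : 0 < n) (hα : 0 < α) (f : ℝ → ℝ) (x : ℝ) :
    U n α f x = ∑' i, negBinomialWeight (x / α) (n * α) i * gammaMean n i f := by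
  rw [U, ← tsum_mul_left]
  congr 1; ext i
  have hbase : α + 1 / (n : ℝ) = (1 + n * α) / n := by field_simp; ring
  rw [risingFac_eq_pow_mul_ascPochhammer hα.ne', negBinomialWeight, gammaMean, neg_div, hbase,
    zpow_neg, zpow_natCast, div_pow, div_pow]
  field_simp
  ring

theorem hasSum_negBinomialWeight_mul_gammaMean_sub_sq (hn : 0 < n) (hα : 0 < α) (x : ℝ) :
    HasSum (fun i => negBinomialWeight (x / α) (n * α) i * gammaMean n i (fun u => (u - x) ^ 2))
      (x * α + 2 * x / n + 2 / n ^ 2) := by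
  have hp : 0 ≤ (n : ℝ) * α := by positivity
  -- `gammaMean n i ((· - x) ^ 2)` is a quadratic polynomial in `i`; sum it against the moments
  have h := ((hasSum_negBinomialWeight_mul_cast_sq (s := x / α) hp).mul_right (1 / (n : ℝ) ^ 2)).add
    (((hasSum_negBinomialWeight_mul_cast (s := x / α) hp).mul_right (3 / n ^ 2 - 2 * x / n)).add
      ((hasSum_negBinomialWeight (s := x / α) hp).mul_right (2 / n ^ 2 - 2 * x / n + x ^ 2)))
  have hval : x * α + 2 * x / n + 2 / n ^ 2 =
      x / α * (n * α) * ((x / α + 1) * (n * α) + 1) * (1 / n ^ 2) +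
        (x / α * (n * α) * (3 / n ^ 2 - 2 * x / n) + 1 * (2 / n ^ 2 - 2 * x / n + x ^ 2)) := by
    field_simp
    ring
  rw [hval]
  refine h.congr_fun fun i => ?_
  rw [gammaMean_sub_sq i hn]
  field_simp
  ring

theorem theta_two_eq (hn : 0 < n) (hα : 0 < α) (x : ℝ) :
    theta n α 2 x = x * α + 2 * x / n + 2 / n ^ 2 := by
  rw [theta, U_eq_tsum hn hα, (hasSum_negBinomialWeight_mul_gammaMean_sub_sq hn hα x).tsum_eq]

theorem theta_two_le (hn : 0 < n) (hα : 0 < α) (hαn : n * α ≤ 1) {x : ℝ} (hx : 0 ≤ x) :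
    theta n α 2 x ≤ (3 * x + 2) / n := by
  have hn' : (1 : ℝ) ≤ n := Nat.one_le_cast.2 hn
  have h1 : x * α ≤ x / n := by
    rw [le_div_iff₀ (by positivity), mul_assoc, mul_comm α]
    exact mul_le_of_le_one_right hx hαn
  have h2 : 2 / (n : ℝ) ^ 2 ≤ 2 / n :=
    div_le_div_of_nonneg_left zero_le_two (by positivity) (by nlinarith)
  rw [theta_two_eq hn hα, add_div, mul_div_assoc, mul_div_assoc]
  linarith

theorem hasSum_negBinomialWeight_mul_gammaMean_exp_mul (hn : 0 < n) (hα : 0 < α) (x : ℝ) {c : ℝ}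
    (hc : c < n) (hsmall : n * α * (n / (n - c) - 1) < 1) :
    HasSum (fun i => negBinomialWeight (x / α) (n * α) i * gammaMean n i (fun u => exp (c * u)))
      (n / (n - c) * (1 - n * α * (n / (n - c) - 1)) ^ (-(x / α))) := by
  have hnc : 0 < (n : ℝ) - c := sub_pos.2 hc
  refine ((hasSum_negBinomialWeight_mul_pow (s := x / α) (by positivity) (by positivity)
    hsmall).mul_left (n / (n - c))).congr_fun fun i => ?_
  rw [gammaMean_exp_mul i hc, pow_succ]
  ring

theorem exists_hasSum_negBinomialWeight_mul_gammaMean_exp_mul_le {x c : ℝ} (hn : 0 < n)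
    (hα : 0 < α) (hαn : n * α ≤ 1) (hx : 0 ≤ x) (hc : 0 < c) (hcn : 4 * c ≤ n) :
    ∃ M ≤ 2 * exp (3 * c * x), HasSum
      (fun i => negBinomialWeight (x / α) (n * α) i * gammaMean n i (fun u => exp (c * u))) M := by
  have hnc : 0 < (n : ℝ) - c := by linarith
  set t := n * α * (n / (n - c) - 1) with ht_def
  have hr : (n : ℝ) / (n - c) - 1 = c / (n - c) := by field_simp; ring
  have hr43 : (n : ℝ) / (n - c) ≤ 4 / 3 := by rw [div_le_iff₀ hnc]; linarith
  have ht0 : 0 ≤ t := by rw [ht_def, hr]; positivity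
  have ht : t ≤ 1 / 3 := by
    rw [ht_def, hr]
    exact (mul_le_of_le_one_left (by positivity) hαn).trans (by rw [div_le_iff₀ hnc]; linarith)
  have hst : x / α * t ≤ 4 / 3 * c * x := by
    rw [ht_def, hr, show x / α * (n * α * (c / (n - c))) = x * c * (n / (n - c)) by field_simp]
    nlinarith [mul_nonneg hx hc.le]
  refine ⟨_, ?_, hasSum_negBinomialWeight_mul_gammaMean_exp_mul hn hα x (by linarith)
    (by linarith)⟩
  calc n / (n - c) * (1 - t) ^ (-(x / α)) ≤ 2 * exp (2 * (x / α) * t) :=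
        mul_le_mul (by linarith) (one_sub_rpow_neg_le_exp (by positivity) ht0 (by linarith))
          (rpow_nonneg (by linarith) _) (by norm_num)
    _ ≤ 2 * exp (3 * c * x) := by
        gcongr 2 * exp ?_
        nlinarith [mul_nonneg hx hc.le]

theorem abs_gammaMean_sub_le_quadratic_add_exp {x c ε K η : ℝ} {g : ℝ → ℝ} (hn : 0 < n)
    (hc : c < n) (hg : AEStronglyMeasurable g (volume.restrict (Ioi 0)))
    (hmaj : ∀ u, 0 < u → |g u - g x| ≤ ε + K * (u - x) ^ 2 + η * exp (c * u)) (i : ℕ) :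
    |gammaMean n i g - g x| ≤
      ε + K * gammaMean n i (fun u => (u - x) ^ 2) + η * gammaMean n i (fun u => exp (c * u)) := by
  have I0 : IntegrableOn (fun u => szaszBasis n i u * ε) (Ioi 0) :=
    IntegrableOn.congr_fun ((integrableOn_szaszBasis_mul_pow i hn 0).mul_const ε)
      (fun u _ => by ring) measurableSet_Ioi
  have I2 : IntegrableOn (fun u => szaszBasis n i u * (K * (u - x) ^ 2)) (Ioi 0) :=
    IntegrableOn.congr_fun ((integrableOn_szaszBasis_mul_sub_sq i hn x).const_mul K)
      (fun u _ => by ring) measurableSet_Ioi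
  have Ie : IntegrableOn (fun u => szaszBasis n i u * (η * exp (c * u))) (Ioi 0) :=
    IntegrableOn.congr_fun ((integrableOn_szaszBasis_mul_exp i hc).const_mul η)
      (fun u _ => by ring) measurableSet_Ioi
  have I02 : IntegrableOn (fun u => szaszBasis n i u * (ε + K * (u - x) ^ 2)) (Ioi 0) :=
    IntegrableOn.congr_fun (I0.add I2) (fun u _ => by simp only [Pi.add_apply]; ring)
      measurableSet_Ioi
  refine (abs_gammaMean_sub_le i hn hg (IntegrableOn.congr_fun (I02.add Ie)
    (fun u _ => by simp only [Pi.add_apply]; ring) measurableSet_Ioi) hmaj).trans_eq ?_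
  rw [gammaMean_add (f := fun u => ε + K * (u - x) ^ 2) i I02 Ie,
    gammaMean_add (f := fun _ => ε) i I0 I2, gammaMean_const i hn, gammaMean_const_mul,
    gammaMean_const_mul]

theorem abs_U_sub_le {x c ε K η : ℝ} {g : ℝ → ℝ} (hn : 0 < n) (hα : 0 < α)
    (hαn : n * α ≤ 1) (hx : 0 ≤ x) (hc : 0 < c) (hcn : 4 * c ≤ n) (hη : 0 ≤ η)
    (hg : AEStronglyMeasurable g (volume.restrict (Ioi 0)))
    (hmaj : ∀ u, 0 < u → |g u - g x| ≤ ε + K * (u - x) ^ 2 + η * exp (c * u)) :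
    |U n α g x - g x| ≤ ε + K * theta n α 2 x + η * (2 * exp (3 * c * x)) := by
  have hp : 0 ≤ (n : ℝ) * α := by positivity
  obtain ⟨M, hM_le, hM⟩ :=
    exists_hasSum_negBinomialWeight_mul_gammaMean_exp_mul_le hn hα hαn hx hc hcn
  have hB := (((hasSum_negBinomialWeight (s := x / α) hp).mul_right ε).add
    ((hasSum_negBinomialWeight_mul_gammaMean_sub_sq hn hα x).mul_left K)).add (hM.mul_left η)
  rw [U_eq_tsum hn hα]
  refine (abs_tsum_mul_sub_le (negBinomialWeight_nonneg (by positivity) hp)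
    (hasSum_negBinomialWeight hp) (hB.congr_fun fun i => by ring)
    (abs_gammaMean_sub_le_quadratic_add_exp hn (by linarith) hg hmaj)).trans ?_
  rw [one_mul, theta_two_eq hn hα]
  gcongr

end U

theorem exists_abs_sub_le_quadratic_add_exp {g : ℝ → ℝ} (hg : ContinuousOn g (Ici 0)) {C A : ℝ}
    (hA : 0 < A) (hgrow : ∀ t, 0 ≤ t → |g t| ≤ C * exp (A * t)) (b : ℝ) {ε η : ℝ} (hε : 0 < ε)
    (hη : 0 < η) :
    ∃ K, 0 ≤ K ∧ ∀ x ∈ Icc 0 b, ∀ u, 0 ≤ u →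
      |g u - g x| ≤ ε + K * (u - x) ^ 2 + η * exp (2 * A * u) := by
  have hC : 0 ≤ C := by simpa using (abs_nonneg _).trans (hgrow 0 le_rfl)
  have hbound : ∀ t T, 0 ≤ t → t ≤ T → |g t| ≤ C * exp (A * T) := fun t T ht htT =>
    (hgrow t ht).trans (by gcongr)
  have htail : Tendsto (fun R => 2 * C * exp (-(A * R))) atTop (𝓝 0) := by
    simpa using (tendsto_exp_atBot.comp
      (tendsto_neg_atTop_atBot.comp (tendsto_id.const_mul_atTop hA))).const_mul (2 * C)
  obtain ⟨R, hRη, hbR⟩ :=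
    ((htail.eventually (ge_mem_nhds hη)).and (eventually_ge_atTop (max b 0))).exists
  obtain ⟨δ, hδ, hδε⟩ := Metric.uniformContinuousOn_iff.1
    (isCompact_Icc.uniformContinuousOn_of_continuous
      (hg.mono (Icc_subset_Ici_self : Icc 0 R ⊆ _))) ε hε
  refine ⟨2 * C * exp (A * R) / δ ^ 2, by positivity, fun x ⟨hx0, hxb⟩ u hu => ?_⟩
  have hxR : x ≤ R := hxb.trans ((le_max_left _ _).trans hbR)
  have hquad : 0 ≤ 2 * C * exp (A * R) / δ ^ 2 * (u - x) ^ 2 := by positivity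
  have hexp : 0 ≤ η * exp (2 * A * u) := by positivity
  rcases le_or_gt u R with huR | hRu
  · rcases lt_or_ge |u - x| δ with hnear | hfar
    · have := hδε u ⟨hu, huR⟩ x ⟨hx0, hxR⟩ (by rwa [Real.dist_eq])
      rw [Real.dist_eq] at this
      linarith
    · have hsq : δ ^ 2 ≤ (u - x) ^ 2 := by rw [← sq_abs (u - x)]; gcongr
      have : 2 * C * exp (A * R) ≤ 2 * C * exp (A * R) / δ ^ 2 * (u - x) ^ 2 := by
        rw [div_mul_eq_mul_div, le_div_iff₀ (by positivity)]
        gcongr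
      linarith [abs_sub (g u) (g x), hbound u R hu huR, hbound x R hx0 hxR]
  · have hgap : 2 * C * exp (A * u) ≤ η * exp (2 * A * u) := by
      calc 2 * C * exp (A * u) = 2 * C * exp (-(A * R)) * exp (A * (u + R)) := by
            rw [mul_assoc (2 * C), ← exp_add]; ring_nf
        _ ≤ η * exp (2 * A * u) :=
            mul_le_mul hRη (exp_le_exp.2 (by nlinarith)) (by positivity) hη.le
    linarith [abs_sub (g u) (g x), hbound u u hu le_rfl, hbound x u hx0 (by linarith)]

theorem stmt9_general (g : ℝ → ℝ) (hg : ContinuousOn g (Set.Ici 0))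
    (C A : ℝ) (hA : 0 < A)
    (hgrow : ∀ t : ℝ, 0 ≤ t → |g t| ≤ C * Real.exp (A * t))
    (α : ℕ → ℝ) (hα : ∀ n : ℕ, 0 < n → 0 < α n ∧ α n ≤ 1 / n)
    (b : ℝ) :
    TendstoUniformlyOn (fun (n : ℕ) (x : ℝ) => U n (α n) g x) g Filter.atTop
      (Set.Icc 0 b) := by
  rw [Metric.tendstoUniformlyOn_iff]
  intro ε hε
  obtain ⟨K, hK0, hK⟩ := exists_abs_sub_le_quadratic_add_exp hg hA hgrow b
    (ε := ε / 3) (η := ε / (6 * exp (6 * A * b))) (by positivity) (by positivity)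
  have hlarge : ∀ᶠ n : ℕ in atTop, 8 * A ≤ n ∧ 3 * K * (3 * b + 2) / ε < n :=
    (tendsto_natCast_atTop_atTop.eventually (eventually_ge_atTop _)).and
      (tendsto_natCast_atTop_atTop.eventually (eventually_gt_atTop _))
  filter_upwards [hlarge, eventually_gt_atTop 0] with n ⟨hnA, hnK⟩ hn x ⟨hx0, hxb⟩
  obtain ⟨hα0, hα1⟩ := hα n hn
  have hn' : (0 : ℝ) < n := by exact_mod_cast hn
  have hαn : n * α n ≤ 1 := by rwa [le_div_iff₀ hn', mul_comm] at hα1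
  have hU := abs_U_sub_le hn hα0 hαn hx0 (c := 2 * A) (by positivity) (by linarith)
    (by positivity) ((hg.mono Ioi_subset_Ici_self).aestronglyMeasurable measurableSet_Ioi)
    fun u hu => hK x ⟨hx0, hxb⟩ u hu.le
  have hΘ : K * theta n (α n) 2 x < ε / 3 := by
    rw [div_lt_iff₀ hε] at hnK
    calc K * theta n (α n) 2 x ≤ K * ((3 * b + 2) / n) := by
          gcongr
          exact (theta_two_le hn hα0 hαn hx0).trans (by gcongr)
      _ < ε / 3 := by rw [← mul_div_assoc, div_lt_iff₀ hn']; linarith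
  have hE : ε / (6 * exp (6 * A * b)) * (2 * exp (3 * (2 * A) * x)) ≤ ε / 3 := by
    calc ε / (6 * exp (6 * A * b)) * (2 * exp (3 * (2 * A) * x))
        ≤ ε / (6 * exp (6 * A * b)) * (2 * exp (6 * A * b)) := by
          gcongr _ * (2 * exp ?_); nlinarith
      _ = ε / 3 := by field_simp; ring
  rw [dist_comm, Real.dist_eq]
  linarith

theorem stmt9 (g : ℝ → ℝ) (hg : ContinuousOn g (Set.Ici 0))
    (C A : ℝ) (hC : 0 < C) (hA : 0 < A)
    (hgrow : ∀ t : ℝ, 0 ≤ t → |g t| ≤ C * Real.exp (A * t))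
    (α : ℕ → ℝ) (hα : ∀ n : ℕ, 0 < n → 0 < α n ∧ α n ≤ 1 / n)
    (b : ℝ) (hb : 0 < b) :
    TendstoUniformlyOn (fun (n : ℕ) (x : ℝ) => U n (α n) g x) g Filter.atTop
      (Set.Icc 0 b) :=
  stmt9_general g hg C A hA hgrow α hα b
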